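/- arXiv:2602.23072 — 3 statements merged into one kernel-verified Lean document; each statement's English description precedes it below -/
import Mathlib

section
/- Let K be a field of characteristic different from 2 and a₁, a₂, a₃, a₄ ∈ K^×. Then the orthogonal sum ⟨a₁, a₂, a₃, a₄⟩ ⊥ ⟨a₁a₂a₃, −a₁a₂a₃⟩ is isometric to a₁·⟪−a₁a₃, −a₁a₂⟫ ⊥ a₄·⟪a₁a₂a₃a₄⟫, where ⟪x, y⟫ = ⟨1, −x⟩ ⊗ ⟨1, −y⟩ and ⟪x⟫ = ⟨1, −x⟩. In particular, ⟨a₁, a₂, a₃, a₄⟩ is Witt equivalent to the sum of a scaled 2-fold Pfister form and a scaled 1-fold Pfister form. -/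
open QuadraticMap TensorProduct Module

/-- Diagonal quadratic form ⟨a 0, …, a (n-1)⟩. -/
noncomputable def diagF (K : Type) [Field K] {n : ℕ} (a : Fin n → K) :
    QuadraticForm K (Fin n → K) :=
  QuadraticMap.weightedSumSquares K a

/-- Orthogonal sum of m hyperbolic planes ⟨1,−1,1,−1,…⟩. -/
noncomputable def hypF (K : Type) [Field K] (m : ℕ) :
    QuadraticForm K (Fin (2 * m) → K) :=
  QuadraticMap.weightedSumSquares K (fun i : Fin (2 * m) => (-1 : K) ^ (i : ℕ))

/-- A form is hyperbolic if it is isometric to a sum of hyperbolic planes. -/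
def IsHyp (K : Type) [Field K] {V : Type} [AddCommGroup V] [Module K V]
    (Q : QuadraticForm K V) : Prop :=
  ∃ m : ℕ, QuadraticMap.Equivalent Q (hypF K m)

/-- Regularity (non-degeneracy) of a quadratic form, via its polar bilinear form. -/
def RegularQF (K : Type) [Field K] {V : Type} [AddCommGroup V] [Module K V]
    (Q : QuadraticForm K V) : Prop :=
  (QuadraticMap.polarBilin Q).Nondegenerate

/-- Witt index: largest dimension of a totally isotropic subspace. -/
noncomputable def wIdx (K : Type) [Field K] {V : Type} [AddCommGroup V] [Module K V]
    (Q : QuadraticForm K V) : ℕ :=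
  sSup {m : ℕ | ∃ W : Submodule K V, Module.finrank K W = m ∧ ∀ v ∈ W, Q v = 0}

/-- The n-fold Pfister form ⟪a 0, …, a (n-1)⟫. -/
noncomputable def pfister (K : Type) [Field K] {n : ℕ} (a : Fin n → K) :
    QuadraticForm K ((Fin n → Bool) → K) :=
  QuadraticMap.weightedSumSquares K
    (fun s : Fin n → Bool => ∏ i : Fin n, if s i then -a i else 1)

/-- Witt equivalence of two quadratic forms. -/
def WittEquiv (K : Type) [Field K] {V W : Type} [AddCommGroup V] [Module K V]
    [AddCommGroup W] [Module K W] (Q₁ : QuadraticForm K V) (Q₂ : QuadraticForm K W) : Prop :=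
  ∃ m₁ m₂ : ℕ, QuadraticMap.Equivalent (Q₁.prod (hypF K m₁)) (Q₂.prod (hypF K m₂))

/-- Orthogonal sum of a family of n-fold Pfister forms. -/
noncomputable def pfisterSum (K : Type) [Field K] {n k : ℕ} (a : Fin k → Fin n → K) :
    QuadraticForm K (Fin k → (Fin n → Bool) → K) :=
  QuadraticMap.pi (fun j : Fin k => pfister K (a j))

/-- The Witt class of Q lies in the n-th power Iⁿ(K) of the fundamental ideal:
Q together with some sum of n-fold Pfister forms is Witt equivalent to another
sum of n-fold Pfister forms. -/
def InI (K : Type) [Field K] (n : ℕ) {V : Type} [AddCommGroup V] [Module K V]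
    (Q : QuadraticForm K V) : Prop :=
  ∃ (k₁ k₂ : ℕ) (a₁ : Fin k₁ → Fin n → K) (a₂ : Fin k₂ → Fin n → K),
    (∀ j i, a₁ j i ≠ 0) ∧ (∀ j i, a₂ j i ≠ 0) ∧
      WittEquiv K (Q.prod (pfisterSum K a₁)) (pfisterSum K a₂)

/-- A field extension of K, bundled. -/
structure FieldExt (K : Type) [Field K] where
  carrier : Type
  [field : Field carrier]
  [alg : Algebra K carrier]

attribute [instance] FieldExt.field FieldExt.alg

section StmtOneAux

@[simp]
lemma aux_cons_val_five {α : Type*} {m : ℕ} (x : α) (u : Fin (m+5) → α) :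
    Matrix.vecCons x u 5 = Matrix.vecHead (Matrix.vecTail (Matrix.vecTail
      (Matrix.vecTail (Matrix.vecTail u)))) :=
  rfl

lemma aux_sum_fin2bool {M : Type*} [AddCommMonoid M] (g : (Fin 2 → Bool) → M) :
    ∑ s : Fin 2 → Bool, g s =
      g ![false, false] + g ![false, true] + g ![true, false] + g ![true, true] := by
  have h : (Finset.univ : Finset (Fin 2 → Bool)) =
      {![false, false], ![false, true], ![true, false], ![true, true]} := by decide
  rw [h, Finset.sum_insert (by decide), Finset.sum_insert (by decide),
    Finset.sum_insert (by decide), Finset.sum_singleton]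
  abel

lemma aux_sum_fin1bool {M : Type*} [AddCommMonoid M] (g : (Fin 1 → Bool) → M) :
    ∑ s : Fin 1 → Bool, g s = g ![false] + g ![true] := by
  have h : (Finset.univ : Finset (Fin 1 → Bool)) = {![false], ![true]} := by decide
  rw [h, Finset.sum_insert (by decide), Finset.sum_singleton]

lemma aux_fin2bool_cases (s : Fin 2 → Bool) : ∃ b0 b1, s = ![b0, b1] :=
  ⟨s 0, s 1, by funext i; fin_cases i <;> rfl⟩

lemma aux_fin1bool_cases (s : Fin 1 → Bool) : ∃ b, s = ![b] :=
  ⟨s 0, by funext i; fin_cases i <;> rfl⟩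

variable (K : Type) [Field K]

/-- forward linear map for the main isometry -/
noncomputable def auxFmap (a₁ a₄ : K) : (Fin 6 → K) →ₗ[K]
    ((Fin 2 → Bool) → K) × ((Fin 1 → Bool) → K) where
  toFun x :=
    (fun s => (if s 0 || s 1 then a₁⁻¹ else 1) *
        x (if s 0 then (if s 1 then 4 else 2) else (if s 1 then 1 else 0)),
     fun t => (if t 0 then a₄⁻¹ else 1) * x (if t 0 then 5 else 3))
  map_add' x y := by
    refine Prod.ext ?_ ?_ <;> funext s <;> simp [mul_add]
  map_smul' c x := by
    refine Prod.ext ?_ ?_ <;> funext s <;> simp <;> ring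

/-- backward linear map for the main isometry -/
noncomputable def auxGmap (a₁ a₄ : K) : (((Fin 2 → Bool) → K) × ((Fin 1 → Bool) → K)) →ₗ[K]
    (Fin 6 → K) where
  toFun p := ![p.1 ![false, false], a₁ * p.1 ![false, true], a₁ * p.1 ![true, false],
    p.2 ![false], a₁ * p.1 ![true, true], a₄ * p.2 ![true]]
  map_add' p q := by
    funext k; fin_cases k <;> simp [mul_add]
  map_smul' c p := by
    funext k; fin_cases k <;> simp <;> ring

noncomputable def auxMainEquiv (a₁ a₄ : K) (h₁ : a₁ ≠ 0) (h₄ : a₄ ≠ 0) :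
    (Fin 6 → K) ≃ₗ[K] ((Fin 2 → Bool) → K) × ((Fin 1 → Bool) → K) :=
  LinearEquiv.ofLinear (auxFmap K a₁ a₄) (auxGmap K a₁ a₄)
    (by
      apply LinearMap.ext; intro p
      refine Prod.ext ?_ ?_
      · funext s
        obtain ⟨b0, b1, rfl⟩ := aux_fin2bool_cases s
        cases b0 <;> cases b1 <;>
          simp [auxFmap, auxGmap] <;> field_simp
      · funext t
        obtain ⟨b, rfl⟩ := aux_fin1bool_cases t
        cases b <;> simp [auxFmap, auxGmap] <;> field_simp)
    (by
      apply LinearMap.ext; intro x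
      funext k; fin_cases k <;> simp [auxFmap, auxGmap] <;> field_simp)

theorem aux_main (a₁ a₂ a₃ a₄ : K) (h₁ : a₁ ≠ 0) (h₄ : a₄ ≠ 0) :
    QuadraticMap.Equivalent
      (diagF K ![a₁, a₂, a₃, a₄, a₁ * a₂ * a₃, -(a₁ * a₂ * a₃)])
      ((a₁ • pfister K ![-(a₁ * a₃), -(a₁ * a₂)]).prod
        (a₄ • pfister K ![a₁ * a₂ * a₃ * a₄])) := by
  refine ⟨{ toLinearEquiv := auxMainEquiv K a₁ a₄ h₁ h₄, map_app' := ?_ }⟩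
  intro x
  show ((a₁ • pfister K ![-(a₁ * a₃), -(a₁ * a₂)]).prod
        (a₄ • pfister K ![a₁ * a₂ * a₃ * a₄])) (auxFmap K a₁ a₄ x) = _
  rw [QuadraticMap.prod_apply]
  simp only [QuadraticMap.smul_apply, pfister, diagF, QuadraticMap.weightedSumSquares_apply]
  rw [aux_sum_fin2bool, aux_sum_fin1bool, Fin.sum_univ_six]
  simp [auxFmap, Fin.prod_univ_two, smul_eq_mul]
  field_simp
  ring

noncomputable def auxHmap (c : K) : (Fin (2*1) → K) →ₗ[K] (Fin 2 → K) where
  toFun y := ![2⁻¹ * c⁻¹ * (y 0 + y 1) + 2⁻¹ * (y 0 - y 1),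
               2⁻¹ * c⁻¹ * (y 0 + y 1) - 2⁻¹ * (y 0 - y 1)]
  map_add' p q := by funext k; fin_cases k <;> (simp; ring)
  map_smul' c p := by funext k; fin_cases k <;> (simp; ring)

noncomputable def auxHinv (c : K) : (Fin 2 → K) →ₗ[K] (Fin (2*1) → K) where
  toFun z := ![2⁻¹ * (c * (z 0 + z 1) + (z 0 - z 1)),
               2⁻¹ * (c * (z 0 + z 1) - (z 0 - z 1))]
  map_add' p q := by funext k; fin_cases k <;> (simp; ring)
  map_smul' c p := by funext k; fin_cases k <;> (simp; ring)

theorem aux_eH [Invertible (2 : K)] (c : K) (hc : c ≠ 0) :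
    QuadraticMap.Equivalent (hypF K 1) (diagF K ![c, -c]) := by
  have h2 : (2 : K) ≠ 0 := Invertible.ne_zero 2
  refine ⟨{ toLinearEquiv := LinearEquiv.ofLinear (auxHmap K c) (auxHinv K c) ?_ ?_,
            map_app' := ?_ }⟩
  · apply LinearMap.ext; intro z
    funext k; fin_cases k <;> (simp [auxHmap, auxHinv]; field_simp; ring)
  · apply LinearMap.ext; intro y
    funext k; fin_cases k <;> (simp [auxHmap, auxHinv]; field_simp; ring)
  · intro y
    show diagF K ![c, -c] (auxHmap K c y) = hypF K 1 y
    simp only [diagF, hypF, QuadraticMap.weightedSumSquares_apply]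
    have h21 : ∀ f : Fin (2*1) → K, ∑ i, f i = f 0 + f 1 := fun f => Fin.sum_univ_two f
    rw [Fin.sum_univ_two, h21]
    simp [auxHmap, smul_eq_mul]
    field_simp
    ring

noncomputable def auxJmap : ((Fin 4 → K) × (Fin 2 → K)) →ₗ[K] (Fin 6 → K) where
  toFun p := ![p.1 0, p.1 1, p.1 2, p.1 3, p.2 0, p.2 1]
  map_add' p q := by funext k; fin_cases k <;> simp
  map_smul' c p := by funext k; fin_cases k <;> simp

noncomputable def auxJinv : (Fin 6 → K) →ₗ[K] ((Fin 4 → K) × (Fin 2 → K)) where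
  toFun z := (![z 0, z 1, z 2, z 3], ![z 4, z 5])
  map_add' p q := by refine Prod.ext ?_ ?_ <;> funext k <;> fin_cases k <;> simp
  map_smul' c p := by refine Prod.ext ?_ ?_ <;> funext k <;> fin_cases k <;> simp

theorem aux_eJ (a₁ a₂ a₃ a₄ c : K) :
    QuadraticMap.Equivalent ((diagF K ![a₁, a₂, a₃, a₄]).prod (diagF K ![c, -c]))
      (diagF K ![a₁, a₂, a₃, a₄, c, -c]) := by
  refine ⟨{ toLinearEquiv := LinearEquiv.ofLinear (auxJmap K) (auxJinv K) ?_ ?_,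
            map_app' := ?_ }⟩
  · apply LinearMap.ext; intro z
    funext k; fin_cases k <;> simp [auxJmap, auxJinv]
  · apply LinearMap.ext; intro p
    refine Prod.ext ?_ ?_ <;> funext k <;> fin_cases k <;> simp [auxJmap, auxJinv]
  · intro p
    show diagF K _ (auxJmap K p) = _
    rw [QuadraticMap.prod_apply]
    simp only [diagF, QuadraticMap.weightedSumSquares_apply]
    rw [Fin.sum_univ_six, Fin.sum_univ_four, Fin.sum_univ_two]
    simp [auxJmap, smul_eq_mul]
    ring

noncomputable def auxZmap {V : Type} [AddCommGroup V] [Module K V] :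
    V ≃ₗ[K] V × (Fin (2*0) → K) :=
  LinearEquiv.ofLinear (LinearMap.prod LinearMap.id 0) (LinearMap.fst K V _)
    (by
      apply LinearMap.ext; intro p
      refine Prod.ext rfl ?_
      funext i; exact absurd i.isLt (by omega))
    (by apply LinearMap.ext; intro v; rfl)

theorem aux_eC {V : Type} [AddCommGroup V] [Module K V] (Q : QuadraticForm K V) :
    QuadraticMap.Equivalent Q (Q.prod (hypF K 0)) := by
  refine ⟨{ toLinearEquiv := auxZmap K, map_app' := ?_ }⟩
  intro v
  show (Q.prod (hypF K 0)) (v, 0) = Q v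
  rw [QuadraticMap.prod_apply, map_zero, add_zero]

end StmtOneAux

/-- ⟨a₁,a₂,a₃,a₄⟩ ⊥ ⟨a₁a₂a₃, −a₁a₂a₃⟩ ≅ a₁⟪−a₁a₃,−a₁a₂⟫ ⊥ a₄⟪a₁a₂a₃a₄⟫, and in
particular ⟨a₁,a₂,a₃,a₄⟩ is Witt equivalent to a scaled 2-fold plus a scaled 1-fold Pfister
form. -/
theorem stmt_1 (K : Type) [Field K] [Invertible (2 : K)] (a₁ a₂ a₃ a₄ : K)
    (h₁ : a₁ ≠ 0) (h₂ : a₂ ≠ 0) (h₃ : a₃ ≠ 0) (h₄ : a₄ ≠ 0) :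
    QuadraticMap.Equivalent
      (diagF K ![a₁, a₂, a₃, a₄, a₁ * a₂ * a₃, -(a₁ * a₂ * a₃)])
      ((a₁ • pfister K ![-(a₁ * a₃), -(a₁ * a₂)]).prod
        (a₄ • pfister K ![a₁ * a₂ * a₃ * a₄])) ∧
    WittEquiv K (diagF K ![a₁, a₂, a₃, a₄])
      ((a₁ • pfister K ![-(a₁ * a₃), -(a₁ * a₂)]).prod
        (a₄ • pfister K ![a₁ * a₂ * a₃ * a₄])) := by
  have hc : a₁ * a₂ * a₃ ≠ 0 := by
    exact mul_ne_zero (mul_ne_zero h₁ h₂) h₃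
  have main := aux_main K a₁ a₂ a₃ a₄ h₁ h₄
  refine ⟨main, 1, 0, ?_⟩
  exact (((QuadraticMap.Equivalent.refl _).prod (aux_eH K _ hc)).trans
    (aux_eJ K a₁ a₂ a₃ a₄ _)).trans (main.trans (aux_eC K _))
end

section
/- Let K be a field of characteristic different from 2 and let L = K(√d) and L′ = K(√d′) be two linearly disjoint quadratic field extensions of K (equivalently, d, d′, dd′ are all non-squares in K). Set M = L ⊗_K L′ = K(√d, √d′). Then N^*_{L/K} ∩ N^*_{L′/K} = K^×² · N^*_{M/K}, where N^*_{M/K} is the image of the norm map from the biquadratic extension M. -/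
open QuadraticMap TensorProduct Module

/-! Norms from a quadratic extension `K(√d)` are exactly the values `a² - d b²`, so the norm
group of `L` depends only on `d`. A norm from `M` is a norm from `K(√d)` and from `K(√d')` by
transitivity of norms. Conversely, if `c = a² - d b² = a'² - d' b'²` with `a + a' ≠ 0` (flip
the sign of `a'` if needed), then `z = (a + a') + b √d + b' √d'` satisfies
`N_{M/K(√d)} z = 2 (a + a') (a + b √d)`, hence `N_{M/K} z = (2 (a + a'))² c`. -/

open IntermediateField Polynomial

section QuadraticExtension

variable {F E : Type*} [Field F] [Field E] [Algebra F E] {d : F} {e : E}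

theorem add_mul_sqrt_eq_zero_iff (hd : ∀ s : F, s ^ 2 ≠ d) (he : e ^ 2 = algebraMap F E d)
    {p q : F} : algebraMap F E p + algebraMap F E q * e = 0 ↔ p = 0 ∧ q = 0 := by
  refine ⟨fun h => ?_, fun ⟨hp, hq⟩ => by simp [hp, hq]⟩
  by_cases hq : q = 0
  · subst hq
    simpa using h
  · refine absurd ?_ (hd (-p / q))
    apply (algebraMap F E).injective
    have hq' : algebraMap F E q ≠ 0 := by simpa using hq
    rw [map_pow, ← he, map_div₀, map_neg, div_pow, div_eq_iff (pow_ne_zero 2 hq')]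
    linear_combination (algebraMap F E p - algebraMap F E q * e) * h

theorem linearIndependent_one_sqrt (hd : ∀ s : F, s ^ 2 ≠ d) (he : e ^ 2 = algebraMap F E d) :
    LinearIndependent F ![(1 : E), e] := by
  refine LinearIndependent.pair_iff.2 fun p q h => ?_
  rw [Algebra.smul_def, Algebra.smul_def, mul_one] at h
  exact (add_mul_sqrt_eq_zero_iff hd he).1 h

noncomputable def sqrtBasis (hd : ∀ s : F, s ^ 2 ≠ d) (he : e ^ 2 = algebraMap F E d)
    (hE : finrank F E = 2) : Basis (Fin 2) F E :=
  basisOfLinearIndependentOfCardEqFinrank (linearIndependent_one_sqrt hd he) (by simp [hE])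

theorem sqrtBasis_equivFun (hd : ∀ s : F, s ^ 2 ≠ d) (he : e ^ 2 = algebraMap F E d)
    (hE : finrank F E = 2) (a b : F) :
    (sqrtBasis hd he hE).equivFun (algebraMap F E a + algebraMap F E b * e) = ![a, b] := by
  rw [← LinearEquiv.eq_symm_apply, Basis.equivFun_symm_apply, Fin.sum_univ_two]
  simp [sqrtBasis, Algebra.smul_def]

theorem exists_eq_add_mul_sqrt (hd : ∀ s : F, s ^ 2 ≠ d) (he : e ^ 2 = algebraMap F E d)
    (hE : finrank F E = 2) (x : E) :
    ∃ a b : F, x = algebraMap F E a + algebraMap F E b * e := by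
  set B := sqrtBasis hd he hE
  refine ⟨B.equivFun x 0, B.equivFun x 1, ?_⟩
  conv_lhs => rw [← B.equivFun.symm_apply_apply x]
  rw [Basis.equivFun_symm_apply, Fin.sum_univ_two]
  simp [B, sqrtBasis, Algebra.smul_def]

theorem norm_add_mul_sqrt (hd : ∀ s : F, s ^ 2 ≠ d) (he : e ^ 2 = algebraMap F E d)
    (hE : finrank F E = 2) (a b : F) :
    Algebra.norm F (algebraMap F E a + algebraMap F E b * e) = a ^ 2 - d * b ^ 2 := by
  set B := sqrtBasis hd he hE
  have hB : ⇑B = ![1, e] := coe_basisOfLinearIndependentOfCardEqFinrank _ _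
  have hrepr (p q : F) (i : Fin 2) :
      B.repr (algebraMap F E p + algebraMap F E q * e) i = ![p, q] i := by
    rw [← sqrtBasis_equivFun hd he hE]
    rfl
  have hmul_e : (algebraMap F E a + algebraMap F E b * e) * e
      = algebraMap F E (d * b) + algebraMap F E a * e := by
    rw [map_mul]
    linear_combination algebraMap F E b * he
  rw [Algebra.norm_eq_matrix_det B, Matrix.det_fin_two]
  simp only [Algebra.leftMulMatrix_eq_repr_mul, hB, Matrix.cons_val_zero, Matrix.cons_val_one,
    mul_one, hmul_e, hrepr]
  ring

theorem exists_norm_eq_iff (hd : ∀ s : F, s ^ 2 ≠ d) (he : e ^ 2 = algebraMap F E d)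
    (hE : finrank F E = 2) (c : F) :
    (∃ x : E, Algebra.norm F x = c) ↔ ∃ a b : F, a ^ 2 - d * b ^ 2 = c := by
  constructor
  · rintro ⟨x, rfl⟩
    obtain ⟨a, b, rfl⟩ := exists_eq_add_mul_sqrt hd he hE x
    exact ⟨a, b, (norm_add_mul_sqrt hd he hE a b).symm⟩
  · rintro ⟨a, b, rfl⟩
    exact ⟨_, norm_add_mul_sqrt hd he hE a b⟩

theorem sq_ne_algebraMap_of_quadratic (hd : ∀ s : F, s ^ 2 ≠ d)
    (he : e ^ 2 = algebraMap F E d) (hE : finrank F E = 2) (h2 : (2 : F) ≠ 0) {d' : F}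
    (hd' : ∀ s : F, s ^ 2 ≠ d') (hdd' : ∀ s : F, s ^ 2 ≠ d * d') (x : E) :
    x ^ 2 ≠ algebraMap F E d' := by
  obtain ⟨a, b, rfl⟩ := exists_eq_add_mul_sqrt hd he hE x
  intro h
  obtain ⟨hre, him⟩ : a ^ 2 + d * b ^ 2 - d' = 0 ∧ 2 * a * b = 0 := by
    rw [← add_mul_sqrt_eq_zero_iff hd he]
    simp only [map_sub, map_add, map_mul, map_pow, map_ofNat]
    linear_combination h - algebraMap F E b ^ 2 * he
  rcases mul_eq_zero.1 him with hab | rfl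
  · obtain rfl : a = 0 := (mul_eq_zero.1 hab).resolve_left h2
    exact hdd' (d * b) (by linear_combination d * hre)
  · exact hd' a (by linear_combination hre)

theorem finrank_adjoin_sqrt (hd : ∀ s : F, s ^ 2 ≠ d) (he : e ^ 2 = algebraMap F E d) :
    finrank F F⟮e⟯ = 2 := by
  have hmonic : (X ^ 2 - C d).Monic := monic_X_pow_sub_C d two_ne_zero
  have hroot : aeval e (X ^ 2 - C d) = 0 := by simp [he]
  have hmin : minpoly F e = X ^ 2 - C d :=
    (minpoly.eq_of_irreducible_of_monic (X_pow_sub_C_irreducible_of_prime Nat.prime_two hd)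
      hroot hmonic).symm
  rw [adjoin.finrank ⟨_, hmonic, hroot⟩, hmin, natDegree_X_pow_sub_C]

theorem IntermediateField.AdjoinSimple.gen_sq_eq (he : e ^ 2 = algebraMap F E d) :
    AdjoinSimple.gen F e ^ 2 = algebraMap F F⟮e⟯ d :=
  (algebraMap F⟮e⟯ E).injective (by simp [he, ← IsScalarTower.algebraMap_apply])

end QuadraticExtension

section Tower

variable {K S M : Type*} [Field K] [Field S] [Field M] [Algebra K S] [Algebra S M] [Algebra K M]
  [IsScalarTower K S M] {d : K} {e : S}

theorem exists_sq_sub_mul_sq_eq_norm (hd : ∀ s : K, s ^ 2 ≠ d) (he : e ^ 2 = algebraMap K S d)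
    (hS : finrank K S = 2) (z : M) : ∃ a b : K, a ^ 2 - d * b ^ 2 = Algebra.norm K z :=
  (exists_norm_eq_iff hd he hS _).1 ⟨Algebra.norm S z, Algebra.norm_norm⟩

theorem exists_norm_eq_sq_mul (hd : ∀ s : K, s ^ 2 ≠ d) (he : e ^ 2 = algebraMap K S d)
    (hS : finrank K S = 2) {d' : K} (hd' : ∀ x : S, x ^ 2 ≠ algebraMap K S d') {t : M}
    (ht : t ^ 2 = algebraMap K M d') (hM : finrank S M = 2) {a b a' b' c : K}
    (hc : a ^ 2 - d * b ^ 2 = c) (hc' : a' ^ 2 - d' * b' ^ 2 = c) :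
    ∃ z : M, Algebra.norm K z = (2 * (a + a')) ^ 2 * c := by
  set u : S := algebraMap K S (a + a') + algebraMap K S b * e
  have ht' : t ^ 2 = algebraMap S M (algebraMap K S d') := by
    rwa [← IsScalarTower.algebraMap_apply]
  have hK : (a + a') ^ 2 + d * b ^ 2 - d' * b' ^ 2 = 2 * (a + a') * a := by
    linear_combination hc' - hc
  have hu : u ^ 2 - algebraMap K S d' * algebraMap K S b' ^ 2
      = algebraMap K S (2 * (a + a')) * (algebraMap K S a + algebraMap K S b * e) := by
    have := congrArg (algebraMap K S) hK
    simp only [u, map_add, map_sub, map_mul, map_pow, map_ofNat] at this ⊢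
    linear_combination algebraMap K S b ^ 2 * he + this
  refine ⟨algebraMap S M u + algebraMap S M (algebraMap K S b') * t, ?_⟩
  rw [← Algebra.norm_norm (S := S), norm_add_mul_sqrt hd' ht' hM, hu, map_mul,
    Algebra.norm_algebraMap, hS, norm_add_mul_sqrt hd he hS, hc]

end Tower

theorem exists_sq_sub_mul_sq_eq_add_ne_zero {K : Type*} [Field K] {d d' a b a' b' c : K}
    (h2 : (2 : K) ≠ 0) (hdd' : ∀ s : K, s ^ 2 ≠ d * d') (hc0 : c ≠ 0)
    (hc : a ^ 2 - d * b ^ 2 = c) (hc' : a' ^ 2 - d' * b' ^ 2 = c) :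
    ∃ a'' b'' : K, a'' ^ 2 - d' * b'' ^ 2 = c ∧ a + a'' ≠ 0 := by
  by_cases hsum : a + a' = 0
  · refine ⟨-a', -b', by linear_combination hc', fun hdiff => ?_⟩
    obtain rfl : a = 0 :=
      (mul_eq_zero.1 (by linear_combination hsum + hdiff : 2 * a = 0)).resolve_left h2
    obtain rfl : a' = 0 := by linear_combination hsum
    have hb' : b' ≠ 0 := by rintro rfl; exact hc0 (by linear_combination -hc')
    exact hdd' (d * b / b') (by field_simp; linear_combination d * (hc' - hc))
  · exact ⟨a', b', hc', hsum⟩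

theorem stmt_5_general (K : Type) [Field K] [Invertible (2 : K)] (d d' : K)
    (h1 : ∀ s : K, s ^ 2 ≠ d) (h2 : ∀ s : K, s ^ 2 ≠ d') (h3 : ∀ s : K, s ^ 2 ≠ d * d')
    (L : Type) [Field L] [Algebra K L] (hL : Module.finrank K L = 2)
    (sL : L) (hsL : sL ^ 2 = algebraMap K L d)
    (L' : Type) [Field L'] [Algebra K L'] (hL' : Module.finrank K L' = 2)
    (sL' : L') (hsL' : sL' ^ 2 = algebraMap K L' d')
    (M : Type) [Field M] [Algebra K M] (hM : Module.finrank K M = 4)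
    (sM tM : M) (hsM : sM ^ 2 = algebraMap K M d) (htM : tM ^ 2 = algebraMap K M d') :
    ∀ c : K, c ≠ 0 →
      (((∃ x : L, Algebra.norm K x = c) ∧ (∃ y : L', Algebra.norm K y = c)) ↔
        ∃ (s : K) (z : M), s ≠ 0 ∧ c = s ^ 2 * Algebra.norm K z) := by
  intro c hc
  have two_ne : (2 : K) ≠ 0 := Invertible.ne_zero 2
  have hS := finrank_adjoin_sqrt h1 hsM
  have hsS := AdjoinSimple.gen_sq_eq hsM
  rw [exists_norm_eq_iff h1 hsL hL, exists_norm_eq_iff h2 hsL' hL']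
  constructor
  · rintro ⟨⟨a, b, hc₁⟩, ⟨a', b', hc₂⟩⟩
    obtain ⟨a', b', hc₂, hne⟩ := exists_sq_sub_mul_sq_eq_add_ne_zero two_ne h3 hc hc₁ hc₂
    have hMS : finrank K⟮sM⟯ M = 2 := by
      have := finrank_mul_finrank K K⟮sM⟯ M
      rw [hS, hM] at this
      omega
    obtain ⟨z, hz⟩ := exists_norm_eq_sq_mul h1 hsS hS
      (sq_ne_algebraMap_of_quadratic h1 hsS hS two_ne h2 h3) htM hMS hc₁ hc₂
    refine ⟨(2 * (a + a'))⁻¹, z, inv_ne_zero (mul_ne_zero two_ne hne), ?_⟩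
    rw [hz]
    field_simp
  · rintro ⟨s, z, -, rfl⟩
    obtain ⟨a, b, hab⟩ := exists_sq_sub_mul_sq_eq_norm h1 hsS hS z
    obtain ⟨a', b', hab'⟩ := exists_sq_sub_mul_sq_eq_norm h2 (AdjoinSimple.gen_sq_eq htM)
      (finrank_adjoin_sqrt h2 htM) z
    exact ⟨⟨s * a, s * b, by rw [← hab]; ring⟩,
      ⟨s * a', s * b', by rw [← hab']; ring⟩⟩

/-- for linearly disjoint quadratic extensions L = K(√d), L′ = K(√d′) and
M = K(√d,√d′), one has N*_{L/K} ∩ N*_{L′/K} = K^×² · N*_{M/K}. -/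
theorem stmt_5 (K : Type) [Field K] [Invertible (2 : K)] (d d' : K)
    (hd : d ≠ 0) (hd' : d' ≠ 0)
    (h1 : ∀ s : K, s ^ 2 ≠ d) (h2 : ∀ s : K, s ^ 2 ≠ d') (h3 : ∀ s : K, s ^ 2 ≠ d * d')
    (L : Type) [Field L] [Algebra K L] (hL : Module.finrank K L = 2)
    (sL : L) (hsL : sL ^ 2 = algebraMap K L d)
    (L' : Type) [Field L'] [Algebra K L'] (hL' : Module.finrank K L' = 2)
    (sL' : L') (hsL' : sL' ^ 2 = algebraMap K L' d')
    (M : Type) [Field M] [Algebra K M] (hM : Module.finrank K M = 4)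
    (sM tM : M) (hsM : sM ^ 2 = algebraMap K M d) (htM : tM ^ 2 = algebraMap K M d') :
    ∀ c : K, c ≠ 0 →
      (((∃ x : L, Algebra.norm K x = c) ∧ (∃ y : L', Algebra.norm K y = c)) ↔
        ∃ (s : K) (z : M), s ≠ 0 ∧ c = s ^ 2 * Algebra.norm K z) :=
  stmt_5_general K d d' h1 h2 h3 L hL sL hsL L' hL' sL' hsL' M hM sM tM hsM htM
end

section
/- Let K be a field of characteristic different from 2 and π an n-fold Pfister form over K. Then G(π) equals the set of nonzero values represented by π: a nonzero scalar λ satisfies λπ ≅ π if and only if π represents λ. -/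
open QuadraticMap TensorProduct Module

/-!
Induct on the number of slots: `⟪a₀, …, aₙ⟫ ≅ ρ ⊥ bρ` with `ρ = ⟪a₁, …, aₙ⟫` and `b = -a₀`, and
roundness passes from `ρ` to `ρ ⊥ bρ`. A nonzero value of `ρ ⊥ bρ` is `c = x + b y` with `x, y`
values of `ρ`. If `x, y ≠ 0`, roundness of `ρ` and the binary isometry `⟨x, by⟩ ≅ ⟨c, bxyc⟩` give
`ρ ⊥ bρ ≅ xρ ⊥ byρ ≅ cρ ⊥ bxycρ ≅ c(ρ ⊥ bρ)`, the last step because `xy` is a similarity factor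
of `ρ`. If `y = 0` or `x = 0`, then `c` or `c / b` is itself a similarity factor of `ρ`.
-/

namespace QuadraticMap

variable {R M₁ M₂ N ι ι' : Type*} [CommSemiring R] [AddCommMonoid M₁] [AddCommMonoid M₂]
  [AddCommMonoid N] [Module R M₁] [Module R M₂] [Module R N] [Fintype ι] [Fintype ι']

theorem Equivalent.smul {Q₁ : QuadraticMap R M₁ N} {Q₂ : QuadraticMap R M₂ N}
    (h : Q₁.Equivalent Q₂) (c : R) : (c • Q₁).Equivalent (c • Q₂) :=
  h.elim fun f => ⟨{ f with map_app' := fun x => congrArg (c • ·) (f.map_app x) }⟩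

theorem Equivalent.smul_mul {Q : QuadraticMap R M₁ N} {c d : R} (hc : (c • Q).Equivalent Q)
    (hd : (d • Q).Equivalent Q) : ((c * d) • Q).Equivalent Q := by
  rw [mul_smul]
  exact (hd.smul c).trans hc

theorem smul_prod (c : R) (Q₁ : QuadraticMap R M₁ N) (Q₂ : QuadraticMap R M₂ N) :
    c • Q₁.prod Q₂ = (c • Q₁).prod (c • Q₂) := by
  ext; simp [smul_add]

theorem weightedSumSquares_smul (c : R) (w : ι → R) :
    weightedSumSquares R (c • w) = c • weightedSumSquares R w := by
  ext v
  simp [Finset.mul_sum, smul_eq_mul, mul_assoc]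

theorem equivalent_weightedSumSquares_comp (w : ι → R) (e : ι' ≃ ι) :
    (weightedSumSquares R w).Equivalent (weightedSumSquares R (w ∘ e)) :=
  ⟨{ LinearEquiv.funCongrLeft R R e with
    map_app' := fun v => by
      simp only [weightedSumSquares_apply]
      exact Fintype.sum_equiv e _ _ fun _ => rfl }⟩

theorem weightedSumSquares_sumElim_equivalent_prod (w₁ : ι → R) (w₂ : ι' → R) :
    (weightedSumSquares R (Sum.elim w₁ w₂)).Equivalent
      ((weightedSumSquares R w₁).prod (weightedSumSquares R w₂)) :=
  ⟨{ LinearEquiv.sumArrowLequivProdArrow ι ι' R R with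
    map_app' := fun v => by simp [Fintype.sum_sum_type] }⟩

end QuadraticMap

namespace QuadraticForm

variable {K V : Type*} [Field K] [AddCommGroup V] [Module K V]

theorem sq_smul_equivalent (Q : QuadraticForm K V) {c : K} (hc : c ≠ 0) :
    ((c ^ 2) • Q).Equivalent Q :=
  ⟨{ LinearEquiv.smulOfNeZero K V c hc with
    map_app' := fun v => by
      change Q (c • v) = c ^ 2 * Q v
      rw [QuadraticMap.map_smul, smul_eq_mul, _root_.sq] }⟩

/-- `⟨u₁, u₂⟩` represents `c = u₁ + u₂` and has determinant `u₁u₂`, hence `⟨u₁, u₂⟩ ≅ ⟨c, u₁u₂c⟩`;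
the isometry survives tensoring with `Q`. -/
theorem prod_smul_equivalent_of_add_eq (Q : QuadraticForm K V) {u₁ u₂ c : K}
    (hc : u₁ + u₂ = c) (hc₀ : c ≠ 0) :
    ((c • Q).prod ((u₁ * u₂ * c) • Q)).Equivalent ((u₁ • Q).prod (u₂ • Q)) := by
  subst hc
  have expand : ∀ (p q : V) (t : K), Q (p + t • q) = Q p + t ^ 2 * Q q + t * polar Q p q := by
    intro p q t
    rw [← smul_eq_mul t, ← polar_smul_right, polar, QuadraticMap.map_smul, smul_eq_mul]
    ring
  refine ⟨{ toFun := fun x => (x.1 + u₂ • x.2, x.1 + (-u₁) • x.2)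
            invFun := fun y => ((u₁ + u₂)⁻¹ • (u₁ • y.1 + u₂ • y.2), (u₁ + u₂)⁻¹ • (y.1 - y.2))
            map_add' := fun x y => by ext <;> dsimp <;> module
            map_smul' := fun a x => by ext <;> dsimp <;> module
            left_inv := fun x => by
              ext <;> dsimp <;> match_scalars <;> field_simp <;> ring
            right_inv := fun y => by
              ext <;> dsimp <;> match_scalars <;> field_simp <;> ring
            map_app' := fun x => by
              simp only [prod_apply, smul_apply, smul_eq_mul, expand]
              ring }⟩

theorem exists_apply_eq_of_smul_equivalent {Q : QuadraticForm K V} {v : V} (hv : Q v = 1) {c : K}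
    (h : (c • Q).Equivalent Q) : ∃ w, Q w = c :=
  h.elim fun f => ⟨f v, by rw [f.map_app, smul_apply, hv, smul_eq_mul, mul_one]⟩

/-- Roundness `G(Q) = D(Q) \ {0}`, where `G(Q) = {c ≠ 0 | c • Q ≅ Q}`. -/
def IsRound (Q : QuadraticForm K V) : Prop :=
  ∀ c : K, c ≠ 0 → ((c • Q).Equivalent Q ↔ ∃ v, Q v = c)

namespace IsRound

variable {Q : QuadraticForm K V}

theorem exists_apply_eq_one (hQ : IsRound Q) : ∃ v, Q v = 1 :=
  (hQ 1 one_ne_zero).1 (by rw [one_smul])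

theorem smul_apply_equivalent (hQ : IsRound Q) {v : V} (hv : Q v ≠ 0) :
    (Q v • Q).Equivalent Q :=
  (hQ _ hv).2 ⟨v, rfl⟩

theorem congr {V' : Type*} [AddCommGroup V'] [Module K V'] {Q' : QuadraticForm K V'}
    (hQ : IsRound Q) (e : Q.Equivalent Q') : IsRound Q' := by
  intro c hc
  have hsim : (c • Q').Equivalent Q' ↔ (c • Q).Equivalent Q :=
    ⟨fun h => (e.smul c).trans (h.trans e.symm), fun h => (e.symm.smul c).trans (h.trans e)⟩
  have hrep : (∃ v, Q' v = c) ↔ ∃ v, Q v = c := e.elim fun f =>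
    ⟨fun ⟨v, hv⟩ => ⟨f.symm v, by rw [f.symm.map_app, hv]⟩,
      fun ⟨v, hv⟩ => ⟨f v, by rw [f.map_app, hv]⟩⟩
  rw [hsim, hrep]
  exact hQ c hc

theorem smul_prod_smul_equivalent (hQ : IsRound Q) (b : K) {c : K} (hc : c ≠ 0) {v : V × V}
    (hv : Q.prod (b • Q) v = c) : (c • Q.prod (b • Q)).Equivalent (Q.prod (b • Q)) := by
  obtain ⟨v₁, v₂⟩ := v
  have hxy : Q v₁ + b * Q v₂ = c := hv
  rw [QuadraticMap.smul_prod, smul_smul]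
  by_cases hy : Q v₂ = 0
  · have hcQ : (c • Q).Equivalent Q := by
      rw [← hxy, hy, mul_zero, add_zero] at hc ⊢
      exact hQ.smul_apply_equivalent hc
    exact hcQ.prod (by rw [mul_comm, mul_smul]; exact hcQ.smul b)
  have hyQ := hQ.smul_apply_equivalent hy
  by_cases hx : Q v₁ = 0
  · rw [hx, zero_add] at hxy
    subst hxy
    have hb : b ≠ 0 := left_ne_zero_of_mul hc
    have hfst : ((b * Q v₂) • Q).Equivalent (b • Q) := by rw [mul_smul]; exact hyQ.smul b
    have hsnd : ((b * Q v₂ * b) • Q).Equivalent Q := by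
      rw [show b * Q v₂ * b = b ^ 2 * Q v₂ by ring]
      exact (sq_smul_equivalent Q hb).smul_mul hyQ
    exact (hfst.prod hsnd).trans ⟨IsometryEquiv.prodComm _ _⟩
  have hxQ := hQ.smul_apply_equivalent hx
  have hsplit : (Q.prod (b • Q)).Equivalent ((Q v₁ • Q).prod ((b * Q v₂) • Q)) :=
    hxQ.symm.prod (by rw [mul_smul]; exact (hyQ.smul b).symm)
  have hsnd : ((Q v₁ * (b * Q v₂) * c) • Q).Equivalent ((c * b) • Q) := by
    rw [show Q v₁ * (b * Q v₂) * c = c * b * (Q v₁ * Q v₂) by ring, mul_smul]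
    exact (hxQ.smul_mul hyQ).smul (c * b)
  exact ((hsplit.trans (prod_smul_equivalent_of_add_eq Q hxy hc).symm).trans
    ((Equivalent.refl _).prod hsnd)).symm

theorem prod_smul (hQ : IsRound Q) (b : K) : IsRound (Q.prod (b • Q)) := by
  obtain ⟨v, hv⟩ := hQ.exists_apply_eq_one
  refine fun c hc => ⟨exists_apply_eq_of_smul_equivalent (v := (v, 0)) ?_, ?_⟩
  · simp [hv]
  · rintro ⟨w, hw⟩
    exact hQ.smul_prod_smul_equivalent b hc hw

end IsRound

end QuadraticForm

section Pfister

open QuadraticForm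

variable {K : Type} [Field K]

theorem pfister_succ_equivalent {n : ℕ} (a : Fin (n + 1) → K) :
    (pfister K a).Equivalent ((pfister K (Fin.tail a)).prod ((-a 0) • pfister K (Fin.tail a))) := by
  let e := (Equiv.boolProdEquivSum _).symm.trans (Fin.consEquiv fun _ : Fin (n + 1) => Bool)
  have hw : (fun s : Fin (n + 1) → Bool => ∏ i, if s i then -a i else 1) ∘ e =
      Sum.elim (fun t => ∏ i, if t i then -Fin.tail a i else 1)
        ((-a 0) • fun t => ∏ i, if t i then -Fin.tail a i else 1) := by
    ext (t | t) <;> simp [e, Fin.consEquiv, Fin.prod_univ_succ, Fin.tail]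
  have := (equivalent_weightedSumSquares_comp _ e).trans
    (hw ▸ weightedSumSquares_sumElim_equivalent_prod _ _)
  rwa [weightedSumSquares_smul] at this

theorem isRound_pfister_zero (a : Fin 0 → K) : IsRound (pfister K a) := by
  have hval : ∀ v, pfister K a v = v default ^ 2 := by
    intro v
    rw [pfister, weightedSumSquares_apply, Fintype.sum_subsingleton _ default]
    simp only [Finset.univ_eq_empty, Finset.prod_empty, one_smul, _root_.sq]
  intro c hc
  refine ⟨exists_apply_eq_of_smul_equivalent (v := fun _ => 1) (by simp [hval]), ?_⟩
  rintro ⟨v, rfl⟩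
  rw [hval] at hc ⊢
  exact sq_smul_equivalent _ (pow_ne_zero_iff two_ne_zero |>.1 hc)

theorem isRound_pfister : ∀ {n : ℕ} (a : Fin n → K), IsRound (pfister K a)
  | 0, a => isRound_pfister_zero a
  | _ + 1, a => ((isRound_pfister (Fin.tail a)).prod_smul (-a 0)).congr
      (pfister_succ_equivalent a).symm

end Pfister

theorem stmt_17_general (K : Type) [Field K] {n : ℕ} (a : Fin n → K)
    (lam : K) (hlam : lam ≠ 0) :
    QuadraticMap.Equivalent (lam • pfister K a) (pfister K a) ↔
      ∃ v : (Fin n → Bool) → K, pfister K a v = lam :=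
  isRound_pfister a lam hlam

/-- Pfister forms are round: λ ∈ G(π) if and only if π represents λ. -/
theorem stmt_17 (K : Type) [Field K] [Invertible (2 : K)] {n : ℕ} (a : Fin n → K)
    (ha : ∀ i, a i ≠ 0) (lam : K) (hlam : lam ≠ 0) :
    QuadraticMap.Equivalent (lam • pfister K a) (pfister K a) ↔
      ∃ v : (Fin n → Bool) → K, pfister K a v = lam :=
  stmt_17_general K a lam hlam
end
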